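/- arXiv:math/0505328 — 3 statements merged into one kernel-verified Lean document; each statement's English description precedes it below -/
import Mathlib

section
/- Let n ≥ 3. There is no finite zig-zag sequence of posets P₀ = {0<1}ⁿ, P₁, …, P_m = {0<1} in which each step is either (a) an isomorphism of posets, or (b) (in either direction) the inclusion P ↪ P' where P' is obtained from P by adding a single new element z into an empty open interval ]x,y[ of P (i.e. x < y in P, ]x,y[ = ∅, and P' = P ∪ {z} with x < z < y). Equivalently: {0<1}ⁿ cannot be connected to the two-element chain {0<1} by such elementary subdivisions and isomorphisms. -/
/-- `Q` is obtained from `P` by inserting a single new element `z` into an empty open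
interval `]x,y[` of `P`: there is an order embedding `f : P ↪o Q` whose image misses
exactly one element `z`, with `x < y` in `P`, no element of `P` strictly between `x`
and `y`, and for every `w ∈ P`, `f w ≤ z ↔ w ≤ x` and `z ≤ f w ↔ y ≤ w`. -/
def IsSubdivisionStep (P Q : Type) [PartialOrder P] [PartialOrder Q] : Prop :=
  ∃ (f : P ↪o Q) (z : Q) (x y : P),
    z ∉ Set.range f ∧ (∀ w : Q, w = z ∨ w ∈ Set.range f) ∧
    x < y ∧ (∀ w : P, ¬ (x < w ∧ w < y)) ∧
    (∀ w : P, f w ≤ z ↔ w ≤ x) ∧ (∀ w : P, z ≤ f w ↔ y ≤ w)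

/-- One step of the zig-zag: an isomorphism of posets, or an elementary subdivision
in either direction. -/
def ZigZagStep (P Q : Type) [PartialOrder P] [PartialOrder Q] : Prop :=
  Nonempty (P ≃o Q) ∨ IsSubdivisionStep P Q ∨ IsSubdivisionStep Q P

section Chi

open Function Classical

/-- Covering pairs of a poset. -/
abbrev CovPairs (P : Type) [PartialOrder P] : Type := {p : P × P // p.1 ⋖ p.2}

/-- The invariant: number of elements minus number of covering pairs. -/
noncomputable def chi (P : Type) [PartialOrder P] : ℤ :=
  (Nat.card P : ℤ) - (Nat.card (CovPairs P) : ℤ)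

theorem chi_congr {P Q : Type} [PartialOrder P] [PartialOrder Q] (e : P ≃o Q) :
    chi P = chi Q := by
  have h1 : Nat.card P = Nat.card Q := Nat.card_congr e.toEquiv
  have h2 : Nat.card (CovPairs P) = Nat.card (CovPairs Q) := by
    refine Nat.card_congr ?_
    refine ⟨fun c => ⟨(e c.1.1, e c.1.2), ?_⟩, fun c => ⟨(e.symm c.1.1, e.symm c.1.2), ?_⟩,
      fun c => ?_, fun c => ?_⟩
    · simpa using c.2
    · simpa using c.2
    · ext <;> simp
    · ext <;> simp
  unfold chi
  rw [h1, h2]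

variable {P Q : Type} [PartialOrder P] [PartialOrder Q]

private noncomputable def optEquiv (f : P ↪o Q) (z : Q) (hz : z ∉ Set.range f)
    (hall : ∀ w : Q, w = z ∨ w ∈ Set.range f) : Option P ≃ Q := by
  refine Equiv.ofBijective (fun o => o.elim z (fun p => f p)) ⟨?_, ?_⟩
  · rintro (_|a) (_|b) hab
    · rfl
    · exact absurd ⟨b, hab.symm⟩ hz
    · exact absurd ⟨a, hab⟩ hz
    · exact congrArg _ (f.injective hab)
  · intro w
    rcases hall w with rfl | ⟨a, rfl⟩
    · exact ⟨none, rfl⟩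
    · exact ⟨some a, rfl⟩

theorem finite_of_step (h : IsSubdivisionStep P Q) (hP : Finite P) : Finite Q := by
  obtain ⟨f, z, x, y, hz, hall, hxy, hempty, hle, hge⟩ := h
  haveI : Finite P := hP
  rw [← Set.finite_univ_iff]
  refine Set.Finite.subset ((Set.finite_range f).insert z) ?_
  intro w _
  rcases hall w with rfl | hw
  · exact Set.mem_insert _ _
  · exact Set.mem_insert_of_mem _ hw

theorem finite_of_step' (h : IsSubdivisionStep P Q) (hQ : Finite Q) : Finite P := by
  obtain ⟨f, z, x, y, _⟩ := h
  exact Finite.of_injective f f.injective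

theorem chi_step (h : IsSubdivisionStep P Q) (hP : Finite P) : chi Q = chi P := by
  have hQ : Finite Q := finite_of_step h hP
  obtain ⟨f, z, x, y, hz, hall, hxy, hempty, hle, hge⟩ := h
  -- basic facts
  have hfxz : f x < z := lt_of_le_of_ne ((hle x).mpr le_rfl) (fun e => hz ⟨x, e⟩)
  have hzfy : z < f y := lt_of_le_of_ne ((hge y).mpr le_rfl) (fun e => hz ⟨y, e.symm⟩)
  -- cardinality of Q
  have hcard : Nat.card Q = Nat.card P + 1 := by
    rw [← Nat.card_congr (optEquiv f z hz hall), Nat.card_congr (Equiv.optionEquivSumPUnit.{0,0} P),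
      Nat.card_sum]
    simp
  -- the destroyed cover
  have hxcy : x ⋖ y := ⟨hxy, fun c h1 h2 => hempty c ⟨h1, h2⟩⟩
  -- covers in Q among image elements
  have cov_im : ∀ u v : P, (f u ⋖ f v) ↔ (u ⋖ v ∧ (u, v) ≠ (x, y)) := by
    intro u v
    constructor
    · intro hc
      refine ⟨hc.of_image f, ?_⟩
      rintro he
      rw [Prod.mk.injEq] at he
      obtain ⟨rfl, rfl⟩ := he
      exact hc.2 hfxz hzfy
    · rintro ⟨huv, hne⟩
      refine ⟨f.strictMono huv.lt, ?_⟩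
      intro c h1 h2
      rcases hall c with rfl | ⟨w, rfl⟩
      · have hux : u ≤ x := (hle u).mp h1.le
        have hyv : y ≤ v := (hge v).mp h2.le
        have hu : u = x := by
          by_contra hne'
          exact huv.2 (lt_of_le_of_ne hux hne') (lt_of_lt_of_le hxy hyv)
        have hv : v = y := by
          by_contra hne'
          exact huv.2 (hu ▸ hxy) (lt_of_le_of_ne hyv (Ne.symm hne'))
        exact hne (by rw [hu, hv])
      · exact huv.2 (f.lt_iff_lt.mp h1) (f.lt_iff_lt.mp h2)
  have cov_fxz : f x ⋖ z := by
    refine ⟨hfxz, ?_⟩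
    intro c h1 h2
    rcases hall c with rfl | ⟨w, rfl⟩
    · exact h2.ne rfl
    · exact (f.lt_iff_lt.mp h1).not_ge ((hle w).mp h2.le)
  have cov_zfy : z ⋖ f y := by
    refine ⟨hzfy, ?_⟩
    intro c h1 h2
    rcases hall c with rfl | ⟨w, rfl⟩
    · exact h1.ne rfl
    · exact (f.lt_iff_lt.mp h2).not_ge ((hge w).mp h1.le)
  -- classification of covers in Q
  have classify : ∀ c : CovPairs Q,
      (∃ u v : P, c.1 = (f u, f v)) ∨ c.1 = (f x, z) ∨ c.1 = (z, f y) := by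
    rintro ⟨⟨a, b⟩, hc⟩
    rcases hall a with rfl | ⟨u, rfl⟩
    · rcases hall b with rfl | ⟨v, rfl⟩
      · exact absurd rfl hc.lt.ne
      · right; right
        have hyv : y ≤ v := (hge v).mp hc.lt.le
        rcases eq_or_lt_of_le hyv with h | h
        · subst h; rfl
        · exact (hc.2 hzfy (f.lt_iff_lt.mpr h)).elim
    · rcases hall b with rfl | ⟨v, rfl⟩
      · right; left
        have hux : u ≤ x := (hle u).mp hc.lt.le
        rcases eq_or_lt_of_le hux with h | h
        · subst h; rfl
        · exact (hc.2 (f.lt_iff_lt.mpr h) hfxz).elim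
      · left; exact ⟨u, v, rfl⟩
  -- bijection for covering pairs
  have hcov : Nat.card (CovPairs Q) = Nat.card (CovPairs P) + 1 := by
    classical
    let T := {c : CovPairs P // c.1 ≠ (x, y)} ⊕ Bool
    let Ff : T → CovPairs Q := fun t =>
      match t with
      | Sum.inl c => ⟨(f c.1.1.1, f c.1.1.2),
          (cov_im c.1.1.1 c.1.1.2).mpr ⟨by exact c.1.2, by simpa using c.2⟩⟩
      | Sum.inr false => ⟨(f x, z), cov_fxz⟩
      | Sum.inr true => ⟨(z, f y), cov_zfy⟩
    have hbij : Function.Bijective Ff := by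
      constructor
      · rintro (c | b) (c' | b') hab
        · have h1 : f c.1.1.1 = f c'.1.1.1 := congrArg (fun d => d.1.1) hab
          have h2 : f c.1.1.2 = f c'.1.1.2 := congrArg (fun d => d.1.2) hab
          have e1 := f.injective h1
          have e2 := f.injective h2
          congr 1
          ext
          · exact e1
          · exact e2
        · have h2 := congrArg (fun d => d.1) hab
          cases b'
          · simp only [Ff] at h2
            rw [Prod.mk.injEq] at h2
            exact absurd ⟨_, h2.2⟩ hz
          · simp only [Ff] at h2
            rw [Prod.mk.injEq] at h2
            exact absurd ⟨_, h2.1⟩ hz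
        · have h2 := congrArg (fun d => d.1) hab
          cases b
          · simp only [Ff] at h2
            rw [Prod.mk.injEq] at h2
            exact absurd ⟨_, h2.2.symm⟩ hz
          · simp only [Ff] at h2
            rw [Prod.mk.injEq] at h2
            exact absurd ⟨_, h2.1.symm⟩ hz
        · have h2 := congrArg (fun d => d.1) hab
          cases b <;> cases b'
          · rfl
          · simp only [Ff] at h2
            rw [Prod.mk.injEq] at h2
            exact absurd h2.1 hfxz.ne
          · simp only [Ff] at h2
            rw [Prod.mk.injEq] at h2
            exact absurd h2.1.symm hfxz.ne
          · rfl
      · rintro ⟨⟨a, b⟩, hcab⟩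
        rcases classify ⟨⟨a, b⟩, hcab⟩ with ⟨u, v, hc⟩ | hc | hc <;>
          simp only [Subtype.coe_mk] at hc
        · rw [Prod.mk.injEq] at hc
          obtain ⟨rfl, rfl⟩ := hc
          have hh := (cov_im u v).mp hcab
          refine ⟨Sum.inl ⟨⟨(u, v), hh.1⟩, by simpa using hh.2⟩, rfl⟩
        · rw [Prod.mk.injEq] at hc
          obtain ⟨rfl, rfl⟩ := hc
          exact ⟨Sum.inr false, rfl⟩
        · rw [Prod.mk.injEq] at hc
          obtain ⟨rfl, rfl⟩ := hc
          exact ⟨Sum.inr true, rfl⟩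
    have h1 : Nat.card (CovPairs Q) = Nat.card T := (Nat.card_eq_of_bijective Ff hbij).symm
    have h2 : Nat.card T = Nat.card {c : CovPairs P // c.1 ≠ (x, y)} + 2 := by
      rw [Nat.card_sum]
      simp [Nat.card_eq_fintype_card]
    have h3 : Nat.card (CovPairs P)
        = Nat.card {c : CovPairs P // c.1 = (x, y)}
          + Nat.card {c : CovPairs P // c.1 ≠ (x, y)} := by
      rw [← Nat.card_sum]
      exact (Nat.card_congr (Equiv.sumCompl _)).symm
    have h4 : Nat.card {c : CovPairs P // c.1 = (x, y)} = 1 := by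
      have hne : Nonempty {c : CovPairs P // c.1 = (x, y)} := ⟨⟨⟨(x, y), hxcy⟩, rfl⟩⟩
      have hss : Subsingleton {c : CovPairs P // c.1 = (x, y)} := by
        constructor
        intro c c'
        have hcc : (c.1 : P × P) = c'.1 := by rw [c.2, c'.2]
        exact Subtype.ext (Subtype.ext hcc)
      exact Nat.card_unique
    omega
  unfold chi
  rw [hcard, hcov]
  push_cast
  ring

end Chi

section Counting

theorem false_covBy_true : (false : Bool) ⋖ true := by
  constructor
  · decide
  · intro c h1 h2
    rw [Bool.lt_iff] at h1 h2
    simp [h1.2] at h2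

theorem chi_bool : chi Bool = 1 := by
  have h1 : Nat.card Bool = 2 := by simp [Nat.card_eq_fintype_card]
  have h2 : Nat.card (CovPairs Bool) = 1 := by
    have hne : Nonempty (CovPairs Bool) := ⟨⟨(false, true), false_covBy_true⟩⟩
    have hss : Subsingleton (CovPairs Bool) := by
      constructor
      rintro ⟨⟨a, b⟩, h⟩ ⟨⟨a', b'⟩, h'⟩
      obtain ⟨ha, hb⟩ := Bool.lt_iff.mp h.lt
      obtain ⟨ha', hb'⟩ := Bool.lt_iff.mp h'.lt
      subst ha hb ha' hb'
      rfl
    exact Nat.card_unique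
  unfold chi
  rw [h1, h2]
  norm_num

variable (n : ℕ)

theorem cube_covBy (a : Fin n → Bool) (i : Fin n) (ha : a i = false) :
    a ⋖ Function.update a i true := by
  have hlt : a < Function.update a i true := by
    refine lt_of_le_of_ne ?_ ?_
    · intro j
      by_cases h : j = i
      · subst h; simp [ha]
      · simp [Function.update_of_ne h]
    · intro h
      have := congrFun h i
      simp [ha] at this
  refine ⟨hlt, ?_⟩
  intro c h1 h2
  have hc : ∀ j, j ≠ i → c j = a j := by
    intro j hj
    have l1 : a j ≤ c j := h1.le j
    have l2 : c j ≤ Function.update a i true j := h2.le j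
    rw [Function.update_of_ne hj] at l2
    exact le_antisymm l2 l1
  cases hci : c i
  · apply h1.ne
    funext j
    by_cases h : j = i
    · subst h; rw [hci, ha]
    · exact (hc j h).symm
  · apply h2.ne
    funext j
    by_cases h : j = i
    · subst h; simp [hci]
    · rw [hc j h, Function.update_of_ne h]

theorem card_covPairs_cube :
    Nat.card (CovPairs (Fin n → Bool)) = n * 2 ^ (n - 1) := by
  classical
  let D := {p : (Fin n → Bool) × Fin n // p.1 p.2 = false}
  let G : D → CovPairs (Fin n → Bool) := fun d =>
    ⟨(d.1.1, Function.update d.1.1 d.1.2 true), cube_covBy n d.1.1 d.1.2 d.2⟩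
  have hbij : Function.Bijective G := by
    constructor
    · rintro ⟨⟨a, i⟩, ha⟩ ⟨⟨a', i'⟩, ha'⟩ hab
      have h1 : a = a' := congrArg (fun d => d.1.1) hab
      subst h1
      have h2 : Function.update a i true = Function.update a i' true :=
        congrArg (fun d => d.1.2) hab
      have h3 : i = i' := by
        by_contra hne
        have := congrFun h2 i
        rw [Function.update_self, Function.update_of_ne hne] at this
        have ha2 : a i = false := ha
        rw [ha2] at this
        exact Bool.false_ne_true this.symm
      subst h3
      rfl
    · rintro ⟨⟨a, b⟩, hab⟩
      have hne : a ≠ b := hab.lt.ne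
      obtain ⟨i, hi⟩ := Function.ne_iff.mp hne
      obtain ⟨hai, hbi⟩ := Bool.lt_iff.mp (lt_of_le_of_ne (hab.lt.le i) hi)
      have hac : a < Function.update a i true := (cube_covBy n a i hai).lt
      have hcb : Function.update a i true ≤ b := by
        intro j
        by_cases h : j = i
        · subst h; rw [Function.update_self]; exact hbi.ge
        · rw [Function.update_of_ne h]; exact hab.lt.le j
      have hb : b = Function.update a i true := by
        by_contra hnb
        exact hab.2 hac (lt_of_le_of_ne hcb (Ne.symm hnb))
      refine ⟨⟨(a, i), hai⟩, ?_⟩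
      apply Subtype.ext
      show (a, Function.update a i true) = (a, b)
      rw [hb]
  have hD : Nat.card D = n * 2 ^ (n - 1) := by
    have e1 : D ≃ Σ i : Fin n, {a : Fin n → Bool // a i = false} :=
      ⟨fun d => ⟨d.1.2, d.1.1, d.2⟩, fun s => ⟨(s.2.1, s.1), s.2.2⟩,
        by rintro ⟨⟨a, i⟩, h⟩; rfl, by rintro ⟨i, a, h⟩; rfl⟩
    have e2 : ∀ i : Fin n, {a : Fin n → Bool // a i = false} ≃ ({j : Fin n // j ≠ i} → Bool) := by
      intro i
      refine ⟨fun a j => a.1 j.1, fun g => ⟨fun j => if h : j = i then false else g ⟨j, h⟩, by simp⟩,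
        ?_, ?_⟩
      · rintro ⟨a, ha⟩
        apply Subtype.ext
        funext j
        by_cases h : j = i
        · subst h; simp [ha]
        · simp [h]
      · intro g
        funext j
        simp [j.2]
    have hcardsub : ∀ i : Fin n, Nat.card {a : Fin n → Bool // a i = false} = 2 ^ (n - 1) := by
      intro i
      rw [Nat.card_congr (e2 i), Nat.card_fun]
      have : Nat.card {j : Fin n // j ≠ i} = n - 1 := by
        rw [Nat.card_eq_fintype_card]
        simp [Fintype.card_subtype_compl]
      rw [this]
      simp [Nat.card_eq_fintype_card]
    rw [Nat.card_congr e1]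
    rw [Nat.card_eq_fintype_card, Fintype.card_sigma]
    have : ∀ i : Fin n, Fintype.card {a : Fin n → Bool // a i = false} = 2 ^ (n - 1) := by
      intro i
      rw [← Nat.card_eq_fintype_card]
      exact hcardsub i
    simp only [this]
    simp [Finset.sum_const, mul_comm]
  rw [← Nat.card_eq_of_bijective G hbij, hD]

theorem chi_cube : chi (Fin n → Bool) = 2 ^ n - n * 2 ^ (n - 1) := by
  unfold chi
  rw [card_covPairs_cube]
  have : Nat.card (Fin n → Bool) = 2 ^ n := by
    rw [Nat.card_fun]
    simp [Nat.card_eq_fintype_card]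
  rw [this]
  push_cast
  ring

theorem chi_cube_ne_one (hn : 3 ≤ n) : chi (Fin n → Bool) ≠ 1 := by
  rw [chi_cube]
  obtain ⟨k, rfl⟩ : ∃ k, n = k + 1 := ⟨n - 1, by omega⟩
  have hk : 2 ≤ k := by omega
  have hk' : (2 : ℤ) ≤ (k : ℤ) := by exact_mod_cast hk
  have hpow : (0 : ℤ) < 2 ^ k := pow_pos (by norm_num) k
  rw [Nat.add_sub_cancel]
  push_cast
  rw [pow_succ]
  nlinarith

end Counting

/-- For `n ≥ 3`, the Boolean lattice `{0<1}ⁿ` cannot be connected to the two-element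
chain `{0<1}` by a finite zig-zag sequence of poset isomorphisms and elementary
subdivisions (in either direction). -/
theorem no_zigzag_cube_to_segment (n : ℕ) (hn : 3 ≤ n) :
    ¬ ∃ (m : ℕ) (F : ℕ → PartOrd),
      Nonempty (F 0 ≃o (Fin n → Bool)) ∧ Nonempty (F m ≃o Bool) ∧
      ∀ i, i < m → ZigZagStep (F i) (F (i + 1)) := by
  rintro ⟨m, F, ⟨e0⟩, ⟨em⟩, hstep⟩
  have key : ∀ i, i ≤ m → Finite (F i) ∧ chi (F i) = chi (Fin n → Bool) := by
    intro i
    induction i with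
    | zero =>
      intro _
      exact ⟨Finite.of_equiv _ e0.toEquiv.symm, chi_congr e0⟩
    | succ i ih =>
      intro hi
      obtain ⟨hfin, hchi⟩ := ih (by omega)
      rcases hstep i (by omega) with ⟨⟨e⟩⟩ | hs | hs
      · exact ⟨Finite.of_equiv _ e.toEquiv, hchi ▸ (chi_congr e).symm⟩
      · exact ⟨finite_of_step hs hfin, hchi ▸ chi_step hs hfin⟩
      · have hfin' : Finite (F (i + 1)) := finite_of_step' hs hfin
        exact ⟨hfin', hchi ▸ (chi_step hs hfin').symm⟩
  obtain ⟨-, hm⟩ := key m le_rfl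
  have h1 : chi (F m) = chi Bool := chi_congr em
  rw [hm, chi_bool] at h1
  exact chi_cube_ne_one n hn h1
end

section
/- Every continuous map from a compact topological space K to the colimit of a sequence X₀ → X₁ → X₂ → ⋯ of closed T₁-inclusions of topological spaces factors through some X_n. In particular, compact spaces are ℵ₀-small relative to closed T₁-inclusions. -/
open CategoryTheory Limits Topology

/-!
Each inclusion `Xₙ → colim X` is a closed embedding, and every point of the colimit that is not
in `X₀` is closed: it first appears in some `X_{q+1}` outside `X_q`, where it is closed by the `T₁`
condition, and closed embeddings keep it closed in all later stages. If a compact set `S` met every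
complement `colim X ∖ Xₙ`, pick `sₙ ∈ S ∖ Xₙ`. Each stage contains only finitely many `sₙ`, so every
subset of `{sₙ}` is closed, and the tails `{sₖ | k ≥ n}` form a decreasing sequence of nonempty
closed subsets of `S` with empty intersection, contradicting compactness. Hence `u(K)` lies in some
`Xₙ`, and `u` factors through the embedding `Xₙ → colim X`.
-/

section FilteredColimit

variable {J : Type} [SmallCategory J] {F : J ⥤ TopCat}

lemma colimit_ι_comp_map {i j : J} (f : i ⟶ j) :
    ⇑(colimit.ι F j) ∘ ⇑(F.map f) = ⇑(colimit.ι F i) :=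
  funext (colimit.w_apply F f)

variable [IsFiltered J]

lemma injective_colimit_ι (hinj : ∀ ⦃i j : J⦄ (f : i ⟶ j), Function.Injective (F.map f))
    (i : J) : Function.Injective (colimit.ι F i) := by
  intro x y hxy
  obtain ⟨k, f, g, hfg⟩ := Concrete.colimit_exists_of_rep_eq F x y hxy
  apply hinj (f ≫ IsFiltered.coeqHom f g)
  conv_rhs => rw [IsFiltered.coeq_condition f g]
  simp only [F.map_comp, ConcreteCategory.comp_apply, hfg]

lemma isClosedEmbedding_colimit_ι (hcl : ∀ ⦃i j : J⦄ (f : i ⟶ j), IsClosedEmbedding (F.map f))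
    (i : J) : IsClosedEmbedding (colimit.ι F i) := by
  have hinj := injective_colimit_ι fun _ _ f ↦ (hcl f).injective
  refine .of_continuous_injective_isClosedMap (colimit.ι F i).hom.continuous (hinj i)
    fun C hC ↦ (TopCat.isClosed_iff_of_isColimit _ (colimit.isColimit F) _).mpr fun j ↦ ?_
  rw [colimit.cocone_ι, ← colimit_ι_comp_map (IsFiltered.leftToMax i j),
    ← colimit_ι_comp_map (IsFiltered.rightToMax i j), Set.image_comp, Set.preimage_comp,
    (hinj _).preimage_image]
  exact ((hcl _).isClosedMap C hC).preimage (F.map _).hom.continuous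

end FilteredColimit

section SequentialColimit

variable {X : ℕ ⥤ TopCat}

lemma isClosedEmbedding_map_of_succ
    (hcl : ∀ n : ℕ, IsClosedEmbedding (X.map (homOfLE (Nat.le_succ n)))) ⦃n m : ℕ⦄
    (f : n ⟶ m) : IsClosedEmbedding (X.map f) := by
  obtain ⟨⟨h⟩⟩ := f
  change IsClosedEmbedding (X.map (homOfLE h))
  induction m, h using Nat.le_induction with
  | base =>
    rw [show (homOfLE _ : n ⟶ n) = 𝟙 n from rfl, X.map_id]
    exact .id
  | succ m hm ih =>
    rw [← homOfLE_comp hm m.le_succ, X.map_comp]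
    exact (hcl m).comp ih

lemma monotone_range_colimit_ι : Monotone fun n ↦ Set.range (colimit.ι X n) := fun _ _ h ↦ by
  simpa only [← colimit_ι_comp_map (homOfLE h)] using Set.range_comp_subset_range _ _

variable (hcl : ∀ n : ℕ, IsClosedEmbedding (X.map (homOfLE (Nat.le_succ n))))
  (hT1 : ∀ (n : ℕ) (y : X.obj (n + 1)),
    y ∉ Set.range (X.map (homOfLE (Nat.le_succ n))) → IsClosed {y})
include hcl hT1

lemma isClosed_singleton_of_notMem_range_map_zero {m : ℕ} (x : X.obj m)
    (hx : x ∉ Set.range (X.map (homOfLE (Nat.zero_le m)))) : IsClosed {x} := by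
  induction m with
  | zero => exact absurd ⟨x, by simp⟩ hx
  | succ m ih =>
    by_cases hxm : x ∈ Set.range (X.map (homOfLE m.le_succ))
    · obtain ⟨x', rfl⟩ := hxm
      have hx' : x' ∉ Set.range (X.map (homOfLE (Nat.zero_le m))) := by
        rintro ⟨x₀, rfl⟩
        exact hx ⟨x₀, by rw [← homOfLE_comp (Nat.zero_le m) m.le_succ, X.map_comp]; rfl⟩
      rw [← Set.image_singleton]
      exact (hcl m).isClosedMap _ (ih x' hx')
    · exact hT1 m x hxm

lemma isClosed_singleton_of_notMem_range_colimit_ι_zero {p : ↑(colimit X)}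
    (hp : p ∉ Set.range (colimit.ι X 0)) : IsClosed {p} := by
  have hinj := injective_colimit_ι fun _ _ f ↦ (isClosedEmbedding_map_of_succ hcl f).injective
  refine (TopCat.isClosed_iff_of_isColimit _ (colimit.isColimit X) _).mpr fun m ↦ ?_
  rw [colimit.cocone_ι]
  by_cases hpm : p ∈ Set.range (colimit.ι X m)
  · obtain ⟨x, rfl⟩ := hpm
    rw [← Set.image_singleton, (hinj m).preimage_image]
    refine isClosed_singleton_of_notMem_range_map_zero hcl hT1 x ?_
    rintro ⟨x₀, rfl⟩
    exact hp ⟨x₀, (colimit.w_apply X _ x₀).symm⟩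
  · rw [Set.preimage_singleton_eq_empty.mpr hpm]
    exact isClosed_empty

lemma isClosed_of_subset_range_of_notMem_range_colimit_ι {s : ℕ → ↑(colimit X)}
    (hs : ∀ k, s k ∉ Set.range (colimit.ι X k)) {T : Set ↑(colimit X)}
    (hT : T ⊆ Set.range s) : IsClosed T := by
  refine (TopCat.isClosed_iff_of_isColimit _ (colimit.isColimit X) _).mpr fun m ↦ ?_
  rw [colimit.cocone_ι, ← Set.preimage_inter_range]
  have hfin : (T ∩ Set.range (colimit.ι X m)).Finite := by
    refine ((Set.finite_Iio m).image s).subset fun p ⟨hpT, hpm⟩ ↦ ?_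
    obtain ⟨k, rfl⟩ := hT hpT
    exact ⟨k, not_le.mp fun hmk ↦ hs k (monotone_range_colimit_ι hmk hpm), rfl⟩
  have hclosed : IsClosed (T ∩ Set.range (colimit.ι X m)) := by
    rw [← Set.biUnion_of_singleton (T ∩ _)]
    refine hfin.isClosed_biUnion fun p ⟨hpT, _⟩ ↦
      isClosed_singleton_of_notMem_range_colimit_ι_zero hcl hT1 ?_
    obtain ⟨k, rfl⟩ := hT hpT
    exact fun h0 ↦ hs k (monotone_range_colimit_ι k.zero_le h0)
  exact hclosed.preimage (colimit.ι X m).hom.continuous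

lemma IsCompact.exists_subset_range_colimit_ι {S : Set ↑(colimit X)} (hS : IsCompact S) :
    ∃ n, S ⊆ Set.range (colimit.ι X n) := by
  by_contra! hS'
  choose s hsS hs using fun n ↦ Set.not_subset.mp (hS' n)
  have htail_closed (n : ℕ) : IsClosed (s '' Set.Ici n) :=
    isClosed_of_subset_range_of_notMem_range_colimit_ι hcl hT1 hs (Set.image_subset_range _ _)
  obtain ⟨p, hp⟩ := IsCompact.nonempty_iInter_of_sequence_nonempty_isCompact_isClosed
    (fun n ↦ s '' Set.Ici n)
    (fun n ↦ Set.image_mono (Set.Ici_subset_Ici.mpr n.le_succ))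
    (fun n ↦ ⟨s n, n, Set.mem_Ici.mpr le_rfl, rfl⟩)
    (hS.of_isClosed_subset (htail_closed 0) (by rintro _ ⟨k, -, rfl⟩; exact hsS k))
    htail_closed
  obtain ⟨N, x, rfl⟩ := Concrete.colimit_exists_rep X p
  obtain ⟨k, hNk, hk⟩ := Set.mem_iInter.mp hp N
  exact hs k (monotone_range_colimit_ι hNk ⟨x, hk.symm⟩)

end SequentialColimit

/-- Every continuous map from a compact space `K` to the colimit of a sequence
`X₀ → X₁ → X₂ → ⋯` of closed `T₁`-inclusions (closed embeddings whose complement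
points are closed) factors through some stage `X_n`; in particular, compact spaces
are `ℵ₀`-small relative to closed `T₁`-inclusions. -/
theorem compact_factors_through_stage (X : ℕ ⥤ TopCat)
    (hcl : ∀ n : ℕ, IsClosedEmbedding (X.map (homOfLE (Nat.le_succ n))))
    (hT1 : ∀ (n : ℕ) (y : X.obj (n + 1)),
      y ∉ Set.range (X.map (homOfLE (Nat.le_succ n))) → IsClosed {y})
    (K : Type) [TopologicalSpace K] [CompactSpace K]
    (u : TopCat.of K ⟶ colimit X) :
    ∃ (n : ℕ) (v : TopCat.of K ⟶ X.obj n), u = v ≫ colimit.ι X n := by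
  obtain ⟨n, hn⟩ := (isCompact_range u.hom.continuous).exists_subset_range_colimit_ι hcl hT1
  obtain ⟨v, hv⟩ := Set.range_subset_range_iff_exists_comp.mp hn
  have hv_cont : Continuous v :=
    (isClosedEmbedding_colimit_ι (isClosedEmbedding_map_of_succ hcl) n).continuous_iff.mpr
      (hv ▸ u.hom.continuous)
  exact ⟨n, TopCat.ofHom ⟨v, hv_cont⟩, by ext k; exact congrFun hv k⟩
end

section
/- Let (X, A) be a deformation retract pair and consider a pushout square in topological spaces: A → U, A ↪ X, with pushout X ⊔_A U =: Ũ. If A ↪ X is a closed embedding and (X, A) is a deformation retract, then (Ũ, U) is a deformation retract pair; in particular the canonical map U → Ũ is a homotopy equivalence. -/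
open CategoryTheory Limits Topology
open scoped unitInterval

/-!
On `X ⊔ U` the homotopy `H ⊔ const` respects the gluing `i a ~ g a` because `H` fixes `A`.
Curried, it is a map out of the pushout into the path space `C(I, Ũ)`, hence a deformation of `Ũ`
(uncurrying is legitimate since `I` is locally compact). Since `i` is an embedding, `H(·, 1)`
factors as `i ∘ r` with `r : X → A` continuous; at time `1` the deformation is therefore
`inr ∘ ρ`, where `ρ : Ũ → U` glues `g ∘ r` with `id_U`.
-/

theorem Topology.IsEmbedding.exists_continuous_lift {α β γ : Type*} [TopologicalSpace α]
    [TopologicalSpace β] [TopologicalSpace γ] {i : α → β} (hi : IsEmbedding i) (f : C(γ, β))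
    (hf : ∀ z, f z ∈ Set.range i) : ∃ r : C(γ, α), ∀ z, i (r z) = f z :=
  ⟨⟨hi.toHomeomorph.symm ∘ Set.codRestrict f _ hf,
    hi.toHomeomorph.symm.continuous.comp (f.continuous.codRestrict hf)⟩, fun z =>
    congrArg Subtype.val (hi.toHomeomorph.apply_symm_apply ⟨f z, hf z⟩)⟩

def ContinuousMap.HomotopyEquiv.ofDeformationRetraction {U Y : Type*} [TopologicalSpace U]
    [TopologicalSpace Y] (j : C(U, Y)) (r : C(Y, U)) (hrj : ∀ u, r (j u) = u) (F : C(Y × I, Y))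
    (F0 : ∀ y, F (y, 0) = y) (F1 : ∀ y, F (y, 1) = j (r y)) :
    ContinuousMap.HomotopyEquiv U Y where
  toFun := j
  invFun := r
  left_inv := by
    rw [show r.comp j = .id U from ContinuousMap.ext hrj]
  right_inv := ⟨ContinuousMap.Homotopy.symm
    { toContinuousMap := F.comp .prodSwap
      map_zero_left := F0
      map_one_left := F1 }⟩

namespace TopCat

universe u

variable {A X U : TopCat.{u}} (i : A ⟶ X) (g : A ⟶ U)

theorem pushout_condition_apply (a : A) : pushout.inl i g (i a) = pushout.inr i g (g a) :=
  ConcreteCategory.congr_hom pushout.condition a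

theorem pushout_inl_or_inr (y : ↥(pushout i g)) :
    (∃ x, pushout.inl i g x = y) ∨ ∃ u, pushout.inr i g u = y := by
  obtain ⟨j, z, rfl⟩ := Concrete.colimit_exists_rep (span i g) y
  rcases j with _ | _ | _
  · refine .inl ⟨i z, ?_⟩
    rw [← colimit.w (span i g) WalkingSpan.Hom.fst]
    rfl
  · exact .inl ⟨z, rfl⟩
  · exact .inr ⟨z, rfl⟩

theorem pushout_funext {Z : Type*} {f₁ f₂ : ↥(pushout i g) → Z}
    (hinl : ∀ x, f₁ (pushout.inl i g x) = f₂ (pushout.inl i g x))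
    (hinr : ∀ u, f₁ (pushout.inr i g u) = f₂ (pushout.inr i g u)) : f₁ = f₂ := by
  funext y
  rcases pushout_inl_or_inr i g y with ⟨x, rfl⟩ | ⟨u, rfl⟩
  exacts [hinl x, hinr u]

noncomputable def pushoutRetraction (r : X ⟶ A) (hr : i ≫ r = 𝟙 A) : pushout i g ⟶ U :=
  pushout.desc (r ≫ g) (𝟙 U) (by rw [reassoc_of% hr, Category.comp_id])

@[simp]
theorem pushoutRetraction_inl (r : X ⟶ A) (hr : i ≫ r = 𝟙 A) (x : X) :
    pushoutRetraction i g r hr (pushout.inl i g x) = g (r x) :=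
  ConcreteCategory.congr_hom (pushout.inl_desc _ _ _) x

@[simp]
theorem pushoutRetraction_inr (r : X ⟶ A) (hr : i ≫ r = 𝟙 A) (u : U) :
    pushoutRetraction i g r hr (pushout.inr i g u) = u :=
  ConcreteCategory.congr_hom (pushout.inr_desc _ _ _) u

section Homotopy

variable {T : Type} [TopologicalSpace T] [LocallyCompactSpace T]
  (H : C(↥X × T, ↥X)) (hH : ∀ a t, H (i a, t) = i a)

noncomputable def pushoutHomotopy : C(↥(pushout i g) × T, ↥(pushout i g)) :=
  ContinuousMap.uncurry <| ConcreteCategory.hom <|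
    pushout.desc (W := TopCat.of C(T, ↥(pushout i g)))
      (ofHom ((pushout.inl i g).hom.comp H).curry)
      (ofHom (ContinuousMap.const'.comp (pushout.inr i g).hom)) <| by
        ext a t
        change pushout.inl i g (H (i a, t)) = pushout.inr i g (g a)
        rw [hH, pushout_condition_apply]

@[simp]
theorem pushoutHomotopy_inl (x : X) (t : T) :
    pushoutHomotopy i g H hH (pushout.inl i g x, t) = pushout.inl i g (H (x, t)) :=
  DFunLike.congr_fun (ConcreteCategory.congr_hom
    (pushout.inl_desc (W := TopCat.of C(T, ↥(pushout i g))) _ _ _) x) t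

@[simp]
theorem pushoutHomotopy_inr (u : U) (t : T) :
    pushoutHomotopy i g H hH (pushout.inr i g u, t) = pushout.inr i g u :=
  DFunLike.congr_fun (ConcreteCategory.congr_hom
    (pushout.inr_desc (W := TopCat.of C(T, ↥(pushout i g))) _ _ _) u) t

theorem pushoutHomotopy_eq_self {t : T} (ht : ∀ x, H (x, t) = x) (y : ↥(pushout i g)) :
    pushoutHomotopy i g H hH (y, t) = y :=
  congrFun (pushout_funext i g (f₁ := fun y => pushoutHomotopy i g H hH (y, t)) (f₂ := id)
    (fun x => by simp [ht]) (fun u => by simp)) y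

theorem pushoutHomotopy_eq_inr_retraction {t : T} (r : X ⟶ A) (hr : i ≫ r = 𝟙 A)
    (ht : ∀ x, H (x, t) = i (r x)) (y : ↥(pushout i g)) :
    pushoutHomotopy i g H hH (y, t) = pushout.inr i g (pushoutRetraction i g r hr y) :=
  congrFun (pushout_funext i g (f₁ := fun y => pushoutHomotopy i g H hH (y, t))
    (f₂ := fun y => pushout.inr i g (pushoutRetraction i g r hr y))
    (fun x => by simp [ht, pushout_condition_apply]) (fun u => by simp)) y

end Homotopy

end TopCat

/-- Let `(X, A)` be a deformation retract pair, with `i : A → X` a closed embedding,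
witnessed by a homotopy `H` from the identity of `X` to a retraction onto `A` fixing
`A` pointwise. For any attaching map `g : A → U`, the pushout `Ũ = X ⊔_A U` deformation
retracts onto (the image of) `U`; in particular the canonical map `U → Ũ` is a
homotopy equivalence. -/
theorem pushout_deformation_retract (A X U : TopCat) (i : A ⟶ X) (g : A ⟶ U)
    (hi : IsClosedEmbedding i)
    (H : C(↥X × I, ↥X))
    (H0 : ∀ x : X, H (x, 0) = x)
    (H1 : ∀ x : X, H (x, 1) ∈ Set.range i)
    (Hfix : ∀ (a : A) (t : I), H (i a, t) = i a) :
    (∃ H' : C(↥(pushout i g) × I, ↥(pushout i g)),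
      (∀ y : ↥(pushout i g), H' (y, 0) = y) ∧
      (∀ y : ↥(pushout i g), H' (y, 1) ∈ Set.range (pushout.inr i g)) ∧
      (∀ (u : U) (t : I), H' (pushout.inr i g u, t) = pushout.inr i g u)) ∧
    Nonempty (ContinuousMap.HomotopyEquiv ↥U ↥(pushout i g)) := by
  obtain ⟨r, hr⟩ :=
    hi.isEmbedding.exists_continuous_lift (H.comp (.prodMk (.id _) (.const _ 1))) H1
  have hri : i ≫ TopCat.ofHom r = 𝟙 A := by
    ext a
    exact hi.injective (by simpa [Hfix] using hr (i a))
  let ρ := TopCat.pushoutRetraction i g (TopCat.ofHom r) hri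
  have F0 := TopCat.pushoutHomotopy_eq_self i g H Hfix H0
  have F1 := TopCat.pushoutHomotopy_eq_inr_retraction i g H Hfix (TopCat.ofHom r) hri
    (fun x => (hr x).symm)
  exact ⟨⟨_, F0, fun y => ⟨ρ y, (F1 y).symm⟩, TopCat.pushoutHomotopy_inr i g H Hfix⟩,
    ⟨.ofDeformationRetraction (pushout.inr i g).hom ρ.hom
      (TopCat.pushoutRetraction_inr i g _ hri) _ F0 F1⟩⟩
end
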